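/- Let a > 1/4 be real and let n₁, n₂ be natural numbers, not both zero, with n = n₁ + n₂. Then (2a + n₁ − 1/2)^{n₁} * (2a + n₂ − 1/2)^{n₂} ≤ 2^{−n} * (2a + n − 1/2)^{n} * exp( (n₁ − n₂)² / (2a − 1/2 + n) + n(2a − 1/2) / (2a − 1/2 + n) ). -/
import Mathlib

lemma stmt_2_aux (c : ℝ) (hc : 0 < c) (m k : ℕ) :
    (c + m) ^ m ≤ ((c + m + k) / 2) ^ m *
      Real.exp ((m * (c + m - k)) / (c + m + k)) := by
  have hs : 0 < c + (m : ℝ) + k := by positivity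
  have h2 : (c + (m : ℝ) + k) / 2 * ((c + m - k) / (c + m + k) + 1) = c + m := by
    field_simp; ring
  have h1 : c + (m : ℝ) ≤ (c + m + k) / 2 * Real.exp ((c + m - k) / (c + m + k)) := by
    calc c + (m : ℝ) = (c + m + k) / 2 * ((c + m - k) / (c + m + k) + 1) := h2.symm
      _ ≤ (c + m + k) / 2 * Real.exp ((c + m - k) / (c + m + k)) := by
          apply mul_le_mul_of_nonneg_left ?_ (by positivity)
          linarith [Real.add_one_le_exp ((c + (m : ℝ) - k) / (c + m + k))]
  calc (c + (m : ℝ)) ^ m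
      ≤ ((c + m + k) / 2 * Real.exp ((c + m - k) / (c + m + k))) ^ m :=
        pow_le_pow_left₀ (by positivity) h1 m
    _ = ((c + m + k) / 2) ^ m * Real.exp ((m * (c + m - k)) / (c + m + k)) := by
        rw [mul_pow, ← Real.exp_nat_mul, mul_div_assoc]

/-- For real `a > 1/4` and naturals `n₁, n₂` not both zero, with `n = n₁ + n₂`,
`(2a+n₁-1/2)^{n₁} (2a+n₂-1/2)^{n₂}
  ≤ 2^{-n} (2a+n-1/2)^n exp((n₁-n₂)²/(2a-1/2+n) + n(2a-1/2)/(2a-1/2+n))`. -/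
theorem stmt_2 (a : ℝ) (ha : 1 / 4 < a) (n₁ n₂ : ℕ) (hn : n₁ + n₂ ≠ 0) :
    (2 * a + (n₁ : ℝ) - 1 / 2) ^ n₁ * (2 * a + (n₂ : ℝ) - 1 / 2) ^ n₂ ≤
      (2 : ℝ) ^ (-((n₁ + n₂ : ℕ) : ℤ)) * (2 * a + ((n₁ + n₂ : ℕ) : ℝ) - 1 / 2) ^ (n₁ + n₂) *
        Real.exp (((n₁ : ℝ) - (n₂ : ℝ)) ^ 2 / (2 * a - 1 / 2 + ((n₁ + n₂ : ℕ) : ℝ)) +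
          ((n₁ + n₂ : ℕ) : ℝ) * (2 * a - 1 / 2) / (2 * a - 1 / 2 + ((n₁ + n₂ : ℕ) : ℝ))) := by
  set c : ℝ := 2 * a - 1 / 2 with hc_def
  have hc : 0 < c := by simp only [hc_def]; linarith
  have hs : 0 < c + (n₁ : ℝ) + n₂ := by positivity
  have h1 := stmt_2_aux c hc n₁ n₂
  have h2 := stmt_2_aux c hc n₂ n₁
  have key := mul_le_mul h1 h2 (by positivity) (by positivity)
  have e1 : 2 * a + (n₁ : ℝ) - 1 / 2 = c + n₁ := by rw [hc_def]; ring
  have e2 : 2 * a + (n₂ : ℝ) - 1 / 2 = c + n₂ := by rw [hc_def]; ring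
  rw [e1, e2]
  refine key.trans_eq ?_
  push_cast
  rw [show c + (n₂ : ℝ) + n₁ = c + n₁ + n₂ by ring,
    mul_mul_mul_comm, ← pow_add, ← Real.exp_add,
    show 2 * a + ((n₁ : ℝ) + n₂) - 1 / 2 = c + n₁ + n₂ by rw [hc_def]; ring,
    show 2 * a - 1/2 + ((n₁ : ℝ) + n₂) = c + n₁ + n₂ from by rw [hc_def]; ring]
  congr 1
  · rw [div_pow, zpow_neg, show ((n₁ : ℤ) + n₂) = ((n₁ + n₂ : ℕ) : ℤ) by push_cast; ring,
      zpow_natCast]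
    field_simp
  · congr 1
    field_simp
    ring
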